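/- Let M = M1 ⊕ M2 where M1 is a fully invariant submodule of M. If M is H-supplemented, then both M1 and M2 are H-supplemented. -/

import Mathlib

universe u v

/-- `N` is a small (superfluous) submodule of `M`. -/
def SmallSub (R : Type v) [Ring R] {M : Type u} [AddCommGroup M] [Module R M]
    (N : Submodule R M) : Prop :=
  ∀ X : Submodule R M, N ⊔ X = ⊤ → X = ⊤

/-- `D` is a direct summand of `M`. -/
def IsDirectSummand (R : Type v) [Ring R] {M : Type u} [AddCommGroup M] [Module R M]
    (D : Submodule R M) : Prop :=
  ∃ D' : Submodule R M, IsCompl D D'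

/-- `M` is H-supplemented: for every submodule `X` there is a direct summand `D`
with `(X+D)/D ≪ M/D` and `(X+D)/X ≪ M/X`. -/
def HSupplemented (R : Type v) [Ring R] (M : Type u) [AddCommGroup M] [Module R M] : Prop :=
  ∀ X : Submodule R M, ∃ D : Submodule R M, IsDirectSummand R D ∧
    SmallSub R ((X ⊔ D).map D.mkQ) ∧ SmallSub R ((X ⊔ D).map X.mkQ)

/-- Condition (D3). -/
def CondD3 (R : Type v) [Ring R] (M : Type u) [AddCommGroup M] [Module R M] : Prop :=
  ∀ K L : Submodule R M, IsDirectSummand R K → IsDirectSummand R L → K ⊔ L = ⊤ →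
    IsDirectSummand R (K ⊓ L)

/-- `N` is a fully invariant submodule of `M`. -/
def FullyInvariant (R : Type v) [Ring R] {M : Type u} [AddCommGroup M] [Module R M]
    (N : Submodule R M) : Prop :=
  ∀ f : M →ₗ[R] M, N.map f ≤ N

/-!
In lattice terms, `M` is H-supplemented when every submodule `X` has a direct summand `D` with
the same supplements: `X + Y = M ↔ D + Y = M` for all `Y`. Full invariance of `M₁` gives
`M₁ = (M₁ ∩ D) ⊕ (M₁ ∩ D')` for every decomposition `M = D ⊕ D'`.

For `M₂ ≅ M / M₁` this makes `(M₁ + D) / M₁` a direct summand, with the same supplements as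
`(M₁ + X) / M₁`. For `X ≤ M₁`, refine `D ⊕ D'` to a decomposition `M = M₁ ⊕ K` with
`D + K = (M₁ ∩ D) + K`; then `M₁ ∩ D` is the summand of `M₁` we need, because a submodule
`Z ≤ M₁` equals `M₁` iff `Z + K = M`.
-/

open Set

section Lattice

variable {α β : Type*} [Lattice α] [BoundedOrder α] [Lattice β] [BoundedOrder β]

def HSupplementedLattice (α : Type*) [Lattice α] [BoundedOrder α] : Prop :=
  ∀ x : α, ∃ d, IsComplemented d ∧ ∀ y, x ⊔ y = ⊤ ↔ d ⊔ y = ⊤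

theorem forall_sup_eq_top_iff_iff (a b : α) :
    (∀ y, a ⊔ y = ⊤ ↔ b ⊔ y = ⊤) ↔
      (∀ y, b ≤ y → a ⊔ y = ⊤ → y = ⊤) ∧ (∀ y, a ≤ y → b ⊔ y = ⊤ → y = ⊤) := by
  refine ⟨fun h => ⟨fun y hby hay => ?_, fun y hay hby => ?_⟩,
    fun ⟨hb, ha⟩ y => ⟨fun hay => ?_, fun hby => ?_⟩⟩
  · simpa [sup_eq_right.mpr hby] using (h y).mp hay
  · simpa [sup_eq_right.mpr hay] using (h y).mpr hby
  · exact hb _ le_sup_left (eq_top_mono (sup_le_sup_left le_sup_right a) hay)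
  · exact ha _ le_sup_left (eq_top_mono (sup_le_sup_left le_sup_right b) hby)

theorem HSupplementedLattice.of_orderIso (e : α ≃o β) (h : HSupplementedLattice α) :
    HSupplementedLattice β := by
  intro x
  obtain ⟨d, ⟨d', hdd'⟩, hd⟩ := h (e.symm x)
  refine ⟨e d, ⟨e d', e.isCompl hdd'⟩, fun y => ?_⟩
  rw [← map_eq_top_iff e.symm, e.symm.map_sup, hd, ← map_eq_top_iff e, e.map_sup,
    e.apply_symm_apply]

theorem IsCompl.sup_eq_top_iff_eq [IsModularLattice α] {n k z : α} (h : IsCompl n k)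
    (hz : z ≤ n) : z ⊔ k = ⊤ ↔ z = n :=
  ⟨fun hzk =>
    (le_iff_eq_of_codisjoint_of_disjoint (codisjoint_iff.mpr hzk) h.disjoint.symm).mp hz,
    fun hzn => hzn ▸ h.sup_eq_top⟩

theorem sup_inf_sup_le_of_le_inf_sup_inf [IsModularLattice α] {m d d' : α} (hd : Disjoint d d')
    (hm : m ≤ m ⊓ d ⊔ m ⊓ d') : (m ⊔ d) ⊓ (m ⊔ d') ≤ m := by
  have hmd : m ⊔ d = m ⊓ d' ⊔ d := le_antisymm
    (sup_le (hm.trans (sup_comm (m ⊓ d) _ ▸ sup_le_sup_left inf_le_right _)) le_sup_right)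
    (sup_le_sup_right inf_le_left d)
  have hmd' : m ⊔ d' = m ⊓ d ⊔ d' := le_antisymm
    (sup_le (hm.trans (sup_le_sup_left inf_le_right _)) le_sup_right)
    (sup_le_sup_right inf_le_left d')
  calc (m ⊔ d) ⊓ (m ⊔ d')
      = m ⊓ d ⊔ d' ⊓ (m ⊓ d' ⊔ d) := by
        rw [hmd, hmd', inf_comm, sup_inf_assoc_of_le _ (inf_le_right.trans le_sup_right)]
    _ = m ⊓ d ⊔ m ⊓ d' := by
        rw [inf_comm d', sup_inf_assoc_of_le _ inf_le_right, hd.eq_bot, sup_bot_eq]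
    _ ≤ m := sup_le inf_le_left inf_le_left

theorem exists_isCompl_sup_eq_inf_sup [IsModularLattice α] {m₁ m₂ d d' : α}
    (hm : IsCompl m₁ m₂) (hd : IsCompl d d') (hdec : m₁ ≤ m₁ ⊓ d ⊔ m₁ ⊓ d') :
    ∃ k, IsCompl m₁ k ∧ d ⊔ k = m₁ ⊓ d ⊔ k := by
  set a := m₁ ⊓ d
  set a' := m₁ ⊓ d'
  have haa' : a ⊔ a' = m₁ := le_antisymm (sup_le inf_le_left inf_le_left) hdec
  have hdisj : Disjoint a a' := hd.disjoint.mono inf_le_right inf_le_right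
  have ha : IsCompl a (a' ⊔ m₂) :=
    hdisj.isCompl_sup_right_of_isCompl_sup_left (haa' ▸ hm)
  have ha' : IsCompl a' (a ⊔ m₂) :=
    hdisj.symm.isCompl_sup_right_of_isCompl_sup_left (sup_comm a a' ▸ haa' ▸ hm)
  set b := (a' ⊔ m₂) ⊓ d
  set c := (a ⊔ m₂) ⊓ d'
  have hab : a ⊔ b = d := by
    rw [← sup_inf_assoc_of_le _ inf_le_right, ha.sup_eq_top, top_inf_eq]
  have ha'c : a' ⊔ c = d' := by
    rw [← sup_inf_assoc_of_le _ inf_le_right, ha'.sup_eq_top, top_inf_eq]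
  have hbd : Disjoint (a ⊔ b) (a' ⊔ c) := hab ▸ ha'c ▸ hd.disjoint
  have ha'bc : Disjoint a' (b ⊔ c) := sup_comm c b ▸
    (ha'.disjoint.mono_right inf_le_left).disjoint_sup_right_of_disjoint_sup_left
      (hbd.symm.mono_right le_sup_right)
  have habc : Disjoint a (a' ⊔ (b ⊔ c)) := by
    have := (ha.disjoint.mono_right inf_le_left).disjoint_sup_right_of_disjoint_sup_left hbd
    rwa [sup_left_comm] at this
  refine ⟨b ⊔ c, ⟨haa' ▸ ha'bc.disjoint_sup_left_of_disjoint_sup_right habc, ?_⟩, ?_⟩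
  · rw [codisjoint_iff, ← haa', ← hd.sup_eq_top, ← hab, ← ha'c]
    exact sup_sup_sup_comm a a' b c
  · rw [← hab, sup_assoc, sup_left_idem]

theorem HSupplementedLattice.Iic_of_isCompl [IsModularLattice α] {m₁ m₂ : α}
    (hm : IsCompl m₁ m₂) (hdec : ∀ d d', IsCompl d d' → m₁ ≤ m₁ ⊓ d ⊔ m₁ ⊓ d')
    (h : HSupplementedLattice α) : HSupplementedLattice (Iic m₁) := by
  rintro ⟨x, hx⟩
  obtain ⟨d, ⟨d', hdd'⟩, hxd⟩ := h x
  obtain ⟨k, hk, hdk⟩ := exists_isCompl_sup_eq_inf_sup hm hdd' (hdec d d' hdd')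
  have hcompl : IsCompl (⟨m₁ ⊓ d, inf_le_left⟩ : Iic m₁) ⟨m₁ ⊓ d', inf_le_left⟩ :=
    Iic.isCompl_iff.mpr ⟨hdd'.disjoint.mono inf_le_right inf_le_right,
      le_antisymm (sup_le inf_le_left inf_le_left) (hdec d d' hdd')⟩
  refine ⟨_, ⟨_, hcompl⟩, ?_⟩
  rintro ⟨y, hy⟩
  simp only [Subtype.ext_iff, Iic.coe_sup, Iic.coe_top]
  rw [← hk.sup_eq_top_iff_eq (sup_le hx hy), ← hk.sup_eq_top_iff_eq (sup_le inf_le_left hy),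
    sup_assoc, hxd, ← sup_assoc, sup_right_comm, hdk, sup_right_comm]

theorem HSupplementedLattice.Ici_of_sup_inf_sup_le {m : α}
    (hm : ∀ d d', IsCompl d d' → (m ⊔ d) ⊓ (m ⊔ d') ≤ m)
    (h : HSupplementedLattice α) : HSupplementedLattice (Ici m) := by
  rintro ⟨x, -⟩
  obtain ⟨d, ⟨d', hdd'⟩, hxd⟩ := h x
  have hcompl : IsCompl (⟨m ⊔ d, le_sup_left⟩ : Ici m) ⟨m ⊔ d', le_sup_left⟩ :=
    Ici.isCompl_iff.mpr ⟨le_antisymm (hm d d' hdd') (le_inf le_sup_left le_sup_left),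
      hdd'.codisjoint.mono le_sup_right le_sup_right⟩
  refine ⟨_, ⟨_, hcompl⟩, ?_⟩
  rintro ⟨y, hy⟩
  simp only [Subtype.ext_iff, Ici.coe_sup, Ici.coe_top]
  rw [hxd, sup_assoc, sup_left_comm, sup_eq_right.mpr (show m ≤ y from hy)]

end Lattice

section Module

variable {R : Type v} [Ring R] {M : Type u} [AddCommGroup M] [Module R M]

theorem smallSub_map_mkQ_iff (A B : Submodule R M) :
    SmallSub R ((A ⊔ B).map B.mkQ) ↔ ∀ Y, B ≤ Y → A ⊔ Y = ⊤ → Y = ⊤ := by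
  have hsup : ∀ Y, B ≤ Y → ((A ⊔ B).map B.mkQ ⊔ Y.map B.mkQ = ⊤ ↔ A ⊔ Y = ⊤) := fun Y hY => by
    rw [← Submodule.map_sup, Submodule.map_mkQ_eq_top, sup_assoc A, sup_eq_right.mpr hY,
      sup_left_comm, sup_eq_right.mpr hY]
  have htop : ∀ Y, B ≤ Y → (Y.map B.mkQ = ⊤ ↔ Y = ⊤) := fun Y hY => by
    rw [Submodule.map_mkQ_eq_top, sup_eq_right.mpr hY]
  refine ⟨fun h Y hY hAY => (htop Y hY).mp (h _ ((hsup Y hY).mpr hAY)), fun h X hX => ?_⟩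
  obtain ⟨Y, hY, rfl⟩ : ∃ Y, B ≤ Y ∧ Y.map B.mkQ = X :=
    ⟨_, B.le_comap_mkQ X, Submodule.map_comap_eq_of_surjective B.mkQ_surjective X⟩
  exact (htop Y hY).mpr (h Y hY ((hsup Y hY).mp hX))

theorem hSupplemented_iff_hSupplementedLattice :
    HSupplemented R M ↔ HSupplementedLattice (Submodule R M) := by
  refine forall_congr' fun X => exists_congr fun D => and_congr Iff.rfl ?_
  rw [forall_sup_eq_top_iff_iff, smallSub_map_mkQ_iff, sup_comm X D, smallSub_map_mkQ_iff]

theorem FullyInvariant.le_inf_sup_inf {N D D' : Submodule R M} (hN : FullyInvariant R N)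
    (hD : IsCompl D D') : N ≤ N ⊓ D ⊔ N ⊓ D' := by
  intro x hx
  have hpx : D.projection D' hD x ∈ N := hN _ ⟨x, hx, rfl⟩
  exact Submodule.mem_sup.mpr ⟨_, ⟨hpx, D.projection_apply_mem hD x⟩, _,
    ⟨sub_mem hx hpx, D.sub_projection_mem hD x⟩, add_sub_cancel _ _⟩

end Module

theorem stmt13 {R : Type v} [Ring R] {M : Type u} [AddCommGroup M] [Module R M]
    (M1 M2 : Submodule R M) (hcompl : IsCompl M1 M2)
    (hfi : FullyInvariant R M1) (hH : HSupplemented R M) :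
    HSupplemented R ↥M1 ∧ HSupplemented R ↥M2 := by
  have hdec : ∀ D D', IsCompl D D' → M1 ≤ M1 ⊓ D ⊔ M1 ⊓ D' := fun _ _ => hfi.le_inf_sup_inf
  have hL := hSupplemented_iff_hSupplementedLattice.mp hH
  have hL₁ : HSupplementedLattice (Iic M1) := hL.Iic_of_isCompl hcompl hdec
  have hL₂ : HSupplementedLattice (Iic M2) :=
    (hL.Ici_of_sup_inf_sup_le fun D D' hD =>
      sup_inf_sup_le_of_le_inf_sup_inf hD.disjoint (hdec D D' hD)).of_orderIso
        hcompl.symm.IicOrderIsoIci.symm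
  exact ⟨hSupplemented_iff_hSupplementedLattice.mpr (hL₁.of_orderIso M1.mapIic.symm),
    hSupplemented_iff_hSupplementedLattice.mpr (hL₂.of_orderIso M2.mapIic.symm)⟩
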